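/- Let 0 < h < 2π/3 and let T_i be the trigonometric cubic B-spline on the uniform knots x_j = x_0 + j·h. Then T_i is twice differentiable at its central knot x_i, and T_i″(x_i) = −3·(cos(h/2)/sin(h/2))² / (2 + 4·cos(h)). -/

import Mathlib

open Real

/-- The uniform knots `x_j = x₀ + j·h`. -/
noncomputable def knot (h x₀ : ℝ) (j : ℤ) : ℝ := x₀ + (j : ℝ) * h

/-- The trigonometric cubic B-spline `T_i` on the uniform knots `x_j = x₀ + j·h`,
defined piecewise via `w_c(x) = sin((x-c)/2)`, `y_c(x) = sin((c-x)/2)` and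
`γ = sin(h/2)·sin(h)·sin(3h/2)`. -/
noncomputable def trigBSpline (h x₀ : ℝ) (i : ℤ) (x : ℝ) : ℝ :=
  let X : ℤ → ℝ := knot h x₀
  let w : ℝ → ℝ := fun c => Real.sin ((x - c) / 2)
  let y : ℝ → ℝ := fun c => Real.sin ((c - x) / 2)
  let γ : ℝ := Real.sin (h / 2) * Real.sin h * Real.sin (3 * h / 2)
  if x ∈ Set.Icc (X (i - 2)) (X (i - 1)) then
    (1 / γ) * (w (X (i - 2))) ^ 3
  else if x ∈ Set.Icc (X (i - 1)) (X i) then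
    (1 / γ) * (w (X (i - 2)) * (w (X (i - 2)) * y (X i) + y (X (i + 1)) * w (X (i - 1)))
      + y (X (i + 2)) * (w (X (i - 1))) ^ 2)
  else if x ∈ Set.Icc (X i) (X (i + 1)) then
    (1 / γ) * (w (X (i - 2)) * (y (X (i + 1))) ^ 2
      + y (X (i + 2)) * (w (X (i - 1)) * y (X (i + 1)) + y (X (i + 2)) * w (X i)))
  else if x ∈ Set.Icc (X (i + 1)) (X (i + 2)) then
    (1 / γ) * (y (X (i + 2))) ^ 3
  else 0

/-!
Near its central knot `x_i`, the spline `T_i` agrees with its piece on `[x_{i-1}, x_i]` to the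
left and with its piece on `[x_i, x_{i+1}]` to the right; both pieces are combinations of
products `sin ((x - a) / 2) * sin ((x - b) / 2) * sin ((x - c) / 2)`, hence smooth. If two smooth
functions agree at `p` together with their first derivatives, the function glued from them at `p`
has derivative equal to the glued derivative, which is differentiable at `p` as soon as the second
derivatives agree there. At `x_i` both pieces have second derivative
`-3 sin h cos² (h/2) / (2γ)`, and `γ = 2 sin³ (h/2) cos (h/2) (1 + 2 cos h)`.
-/

open Filter Topology Set

section Gluing

variable {f g f' g' : ℝ → ℝ} {p a : ℝ}

theorem hasDerivAt_ite_le (hf : HasDerivAt f a p) (hg : HasDerivAt g a p) (hfg : f p = g p) :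
    HasDerivAt (fun x => if x ≤ p then f x else g x) a p := by
  have hl : HasDerivWithinAt (fun x => if x ≤ p then f x else g x) a (Iic p) p :=
    hf.hasDerivWithinAt.congr (fun x hx => if_pos hx) (if_pos le_rfl)
  have hr : HasDerivWithinAt (fun x => if x ≤ p then f x else g x) a (Ici p) p := by
    refine hg.hasDerivWithinAt.congr (fun x hx => ?_) (by rw [if_pos le_rfl, hfg])
    rcases (mem_Ici.mp hx).eq_or_lt with rfl | hpx
    · rw [if_pos le_rfl, hfg]
    · rw [if_neg (not_le.mpr hpx)]
  simpa only [Iic_union_Ici, hasDerivWithinAt_univ] using hl.union hr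

theorem deriv_ite_le (hf : ∀ x, HasDerivAt f (f' x) x) (hg : ∀ x, HasDerivAt g (g' x) x)
    (hfg : f p = g p) (hfg' : f' p = g' p) :
    deriv (fun x => if x ≤ p then f x else g x) = fun x => if x ≤ p then f' x else g' x := by
  funext x
  rcases lt_trichotomy x p with hx | rfl | hx
  · have hev : (fun x => if x ≤ p then f x else g x) =ᶠ[𝓝 x] f := by
      filter_upwards [Iio_mem_nhds hx] with z hz using if_pos hz.le
    rw [hev.deriv_eq, (hf x).deriv, if_pos hx.le]
  · rw [(hasDerivAt_ite_le (hf x) (hfg' ▸ hg x) hfg).deriv, if_pos le_rfl]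
  · have hev : (fun x => if x ≤ p then f x else g x) =ᶠ[𝓝 x] g := by
      filter_upwards [Ioi_mem_nhds hx] with z hz using if_neg (not_le.mpr hz)
    rw [hev.deriv_eq, (hg x).deriv, if_neg (not_le.mpr hx)]

theorem hasDerivAt_deriv_ite_le (hf : ∀ x, HasDerivAt f (f' x) x)
    (hg : ∀ x, HasDerivAt g (g' x) x) (hfg : f p = g p) (hfg' : f' p = g' p)
    (hf' : HasDerivAt f' a p) (hg' : HasDerivAt g' a p) :
    HasDerivAt (deriv fun x => if x ≤ p then f x else g x) a p := by
  rw [deriv_ite_le hf hg hfg hfg']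
  exact hasDerivAt_ite_le hf' hg' hfg'

end Gluing

section Trigonometry

theorem sin_eq_two_mul_sin_half_mul_cos_half (x : ℝ) :
    sin x = 2 * sin (x / 2) * cos (x / 2) := by
  rw [← sin_two_mul, mul_div_cancel₀ x two_ne_zero]

theorem cos_eq_cos_half_sq_sub_sin_half_sq (x : ℝ) :
    cos x = cos (x / 2) ^ 2 - sin (x / 2) ^ 2 := by
  rw [← cos_two_mul', mul_div_cancel₀ x two_ne_zero]

theorem sin_three_mul_div_two (x : ℝ) : sin (3 * x / 2) = sin (x / 2) * (1 + 2 * cos x) := by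
  rw [show 3 * x / 2 = x / 2 + x by ring, sin_add, sin_eq_two_mul_sin_half_mul_cos_half x,
    cos_eq_cos_half_sq_sub_sin_half_sq x]
  linear_combination sin (x / 2) * sin_sq_add_cos_sq (x / 2)

theorem sin_half_sub_comm (a b : ℝ) : sin ((a - b) / 2) = -sin ((b - a) / 2) := by
  rw [← sin_neg, ← neg_div, neg_sub]

end Trigonometry

section SinHalfProd

theorem hasDerivAt_sin_half_sub (a x : ℝ) :
    HasDerivAt (fun x => sin ((x - a) / 2)) (cos ((x - a) / 2) / 2) x := by
  simpa [div_eq_mul_inv] using (((hasDerivAt_id x).sub_const a).div_const 2).sin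

theorem hasDerivAt_cos_half_sub (a x : ℝ) :
    HasDerivAt (fun x => cos ((x - a) / 2)) (-sin ((x - a) / 2) / 2) x := by
  simpa [div_eq_mul_inv] using (((hasDerivAt_id x).sub_const a).div_const 2).cos

noncomputable def sinHalfProd (a b c x : ℝ) : ℝ :=
  sin ((x - a) / 2) * sin ((x - b) / 2) * sin ((x - c) / 2)

noncomputable def sinHalfProdDeriv (a b c x : ℝ) : ℝ :=
  (cos ((x - a) / 2) * sin ((x - b) / 2) * sin ((x - c) / 2)
    + sin ((x - a) / 2) * cos ((x - b) / 2) * sin ((x - c) / 2)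
    + sin ((x - a) / 2) * sin ((x - b) / 2) * cos ((x - c) / 2)) / 2

noncomputable def sinHalfProdDeriv2 (a b c x : ℝ) : ℝ :=
  (2 * (cos ((x - a) / 2) * cos ((x - b) / 2) * sin ((x - c) / 2)
    + cos ((x - a) / 2) * sin ((x - b) / 2) * cos ((x - c) / 2)
    + sin ((x - a) / 2) * cos ((x - b) / 2) * cos ((x - c) / 2))
    - 3 * sinHalfProd a b c x) / 4

theorem hasDerivAt_sinHalfProd (a b c x : ℝ) :
    HasDerivAt (sinHalfProd a b c) (sinHalfProdDeriv a b c x) x := by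
  have := ((hasDerivAt_sin_half_sub a x).mul (hasDerivAt_sin_half_sub b x)).mul
    (hasDerivAt_sin_half_sub c x)
  refine this.congr_deriv ?_
  simp only [sinHalfProdDeriv, Pi.mul_apply]
  ring

theorem hasDerivAt_sinHalfProdDeriv (a b c x : ℝ) :
    HasDerivAt (sinHalfProdDeriv a b c) (sinHalfProdDeriv2 a b c x) x := by
  have hS := hasDerivAt_sin_half_sub
  have hC := hasDerivAt_cos_half_sub
  have := ((((hC a x).mul (hS b x)).mul (hS c x)).add (((hS a x).mul (hC b x)).mul (hS c x))).add
    (((hS a x).mul (hS b x)).mul (hC c x)) |>.div_const 2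
  refine this.congr_deriv ?_
  simp only [sinHalfProdDeriv2, sinHalfProd, Pi.mul_apply]
  ring

end SinHalfProd

noncomputable def trigBSplineGamma (h : ℝ) : ℝ := sin (h / 2) * sin h * sin (3 * h / 2)

section Pieces

variable (F : ℝ → ℝ → ℝ → ℝ → ℝ) (h p : ℝ)

/- Since `y_c = -w_c` and `w_a w_b w_c = sinHalfProd a b c`, the pieces of `T_i` on
`[x_{i-1}, x_i]` and `[x_i, x_{i+1}]` are `splineLeftPiece sinHalfProd h x_i` and
`splineRightPiece sinHalfProd h x_i`; replacing `F` by the derivatives of `sinHalfProd` gives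
their derivatives. -/
noncomputable def splineLeftPiece (x : ℝ) : ℝ :=
  -(F (p - 2 * h) (p - 2 * h) p x + F (p - 2 * h) (p - h) (p + h) x
    + F (p - h) (p - h) (p + 2 * h) x) / trigBSplineGamma h

noncomputable def splineRightPiece (x : ℝ) : ℝ :=
  (F (p - 2 * h) (p + h) (p + h) x + F (p - h) (p + h) (p + 2 * h) x
    + F p (p + 2 * h) (p + 2 * h) x) / trigBSplineGamma h

variable {F} {G : ℝ → ℝ → ℝ → ℝ → ℝ}

theorem hasDerivAt_splineLeftPiece (hF : ∀ a b c x, HasDerivAt (F a b c) (G a b c x) x)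
    (x : ℝ) : HasDerivAt (splineLeftPiece F h p) (splineLeftPiece G h p x) x :=
  (((hF _ _ _ x).add (hF _ _ _ x)).add (hF _ _ _ x)).neg.div_const _

theorem hasDerivAt_splineRightPiece (hF : ∀ a b c x, HasDerivAt (F a b c) (G a b c x) x)
    (x : ℝ) : HasDerivAt (splineRightPiece F h p) (splineRightPiece G h p x) x :=
  (((hF _ _ _ x).add (hF _ _ _ x)).add (hF _ _ _ x)).div_const _

end Pieces

section CenterValues

variable (h p : ℝ)

theorem splineLeftPiece_center_eq_right :
    splineLeftPiece sinHalfProd h p p = splineRightPiece sinHalfProd h p p := by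
  have h2 : 2 * h / 2 = h := by ring
  simp only [splineLeftPiece, splineRightPiece, sinHalfProd, sub_sub_cancel, sub_add_cancel_left,
    sub_self, zero_div, neg_div, sin_neg, sin_zero, h2]
  ring

theorem splineLeftPiece_deriv_center_eq_right :
    splineLeftPiece sinHalfProdDeriv h p p = splineRightPiece sinHalfProdDeriv h p p := by
  have h2 : 2 * h / 2 = h := by ring
  simp only [splineLeftPiece, splineRightPiece, sinHalfProdDeriv, sub_sub_cancel,
    sub_add_cancel_left, sub_self, zero_div, neg_div, sin_neg, cos_neg, sin_zero, cos_zero, h2]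
  rw [sin_eq_two_mul_sin_half_mul_cos_half h]
  ring

theorem splineLeftPiece_deriv2_center :
    splineLeftPiece sinHalfProdDeriv2 h p p
      = -(3 * sin h * cos (h / 2) ^ 2) / (2 * trigBSplineGamma h) := by
  have h2 : 2 * h / 2 = h := by ring
  simp only [splineLeftPiece, sinHalfProdDeriv2, sinHalfProd, sub_sub_cancel,
    sub_add_cancel_left, sub_self, zero_div, neg_div, sin_neg, cos_neg, sin_zero, cos_zero, h2]
  rw [sin_eq_two_mul_sin_half_mul_cos_half h, cos_eq_cos_half_sq_sub_sin_half_sq h]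
  ring

theorem splineRightPiece_deriv2_center :
    splineRightPiece sinHalfProdDeriv2 h p p
      = -(3 * sin h * cos (h / 2) ^ 2) / (2 * trigBSplineGamma h) := by
  have h2 : 2 * h / 2 = h := by ring
  simp only [splineRightPiece, sinHalfProdDeriv2, sinHalfProd, sub_sub_cancel,
    sub_add_cancel_left, sub_self, zero_div, neg_div, sin_neg, cos_neg, sin_zero, cos_zero, h2]
  rw [sin_eq_two_mul_sin_half_mul_cos_half h, cos_eq_cos_half_sq_sub_sin_half_sq h]
  ring

end CenterValues

theorem trigBSplineGamma_eq (h : ℝ) :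
    trigBSplineGamma h = 2 * sin (h / 2) ^ 3 * cos (h / 2) * (1 + 2 * cos h) := by
  rw [trigBSplineGamma, sin_three_mul_div_two, sin_eq_two_mul_sin_half_mul_cos_half h]
  ring

theorem neg_three_sin_mul_cos_half_sq_div_trigBSplineGamma (h : ℝ) :
    -(3 * sin h * cos (h / 2) ^ 2) / (2 * trigBSplineGamma h)
      = -(3 * (cos (h / 2) / sin (h / 2)) ^ 2 / (2 + 4 * cos h)) := by
  rw [trigBSplineGamma_eq, sin_eq_two_mul_sin_half_mul_cos_half h,
    show 2 + 4 * cos h = 2 * (1 + 2 * cos h) by ring]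
  -- if `γ = 0`, both sides vanish because `x / 0 = 0`
  rcases eq_or_ne (sin (h / 2)) 0 with hs | hs
  · simp [hs]
  rcases eq_or_ne (cos (h / 2)) 0 with hc | hc
  · simp [hc]
  rcases eq_or_ne (1 + 2 * cos h) 0 with hC | hC
  · simp [hC]
  field_simp

section Knots

variable (h x₀ : ℝ) (i : ℤ)

theorem knot_sub_two : knot h x₀ (i - 2) = knot h x₀ i - 2 * h := by
  simp only [knot]; push_cast; ring

theorem knot_sub_one : knot h x₀ (i - 1) = knot h x₀ i - h := by
  simp only [knot]; push_cast; ring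

theorem knot_add_one : knot h x₀ (i + 1) = knot h x₀ i + h := by
  simp only [knot]; push_cast; ring

theorem knot_add_two : knot h x₀ (i + 2) = knot h x₀ i + 2 * h := by
  simp only [knot]; push_cast; ring

end Knots

section Identification

variable {h x₀ x : ℝ} {i : ℤ}

theorem trigBSpline_eq_splineLeftPiece (hx : x ∈ Ioc (knot h x₀ (i - 1)) (knot h x₀ i)) :
    trigBSpline h x₀ i x = splineLeftPiece sinHalfProd h (knot h x₀ i) x := by
  have hA : x ∉ Icc (knot h x₀ (i - 2)) (knot h x₀ (i - 1)) := fun hA => by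
    linarith [hA.2, hx.1]
  simp only [trigBSpline, if_neg hA, if_pos (Ioc_subset_Icc_self hx)]
  simp only [splineLeftPiece, sinHalfProd, trigBSplineGamma, knot_sub_two, knot_sub_one,
    knot_add_one, knot_add_two, sin_half_sub_comm _ x]
  ring

theorem trigBSpline_eq_splineRightPiece (hx : x ∈ Ioc (knot h x₀ i) (knot h x₀ (i + 1))) :
    trigBSpline h x₀ i x = splineRightPiece sinHalfProd h (knot h x₀ i) x := by
  have h_pos : 0 < h := by linarith [hx.1, hx.2, knot_add_one h x₀ i]
  have hA : x ∉ Icc (knot h x₀ (i - 2)) (knot h x₀ (i - 1)) := fun hA => by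
    linarith [hA.2, hx.1, knot_sub_one h x₀ i]
  have hB : x ∉ Icc (knot h x₀ (i - 1)) (knot h x₀ i) := fun hB => by linarith [hB.2, hx.1]
  simp only [trigBSpline, if_neg hA, if_neg hB, if_pos (Ioc_subset_Icc_self hx)]
  simp only [splineRightPiece, sinHalfProd, trigBSplineGamma, knot_sub_two, knot_sub_one,
    knot_add_one, knot_add_two, sin_half_sub_comm _ x]
  ring

theorem trigBSpline_eventuallyEq_splinePieces (h0 : 0 < h) :
    trigBSpline h x₀ i =ᶠ[𝓝 (knot h x₀ i)] fun x =>
      if x ≤ knot h x₀ i then splineLeftPiece sinHalfProd h (knot h x₀ i) x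
      else splineRightPiece sinHalfProd h (knot h x₀ i) x := by
  have hmem : Ioo (knot h x₀ (i - 1)) (knot h x₀ (i + 1)) ∈ 𝓝 (knot h x₀ i) :=
    Ioo_mem_nhds (by linarith [knot_sub_one h x₀ i]) (by linarith [knot_add_one h x₀ i])
  filter_upwards [hmem] with x hx
  split_ifs with hxp
  · exact trigBSpline_eq_splineLeftPiece ⟨hx.1, hxp⟩
  · exact trigBSpline_eq_splineRightPiece ⟨not_le.mp hxp, hx.2.le⟩

end Identification

theorem trigBSpline_secondDeriv_center_general (h x₀ : ℝ) (h0 : 0 < h) (i : ℤ) :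
    HasDerivAt (deriv (trigBSpline h x₀ i))
      (-(3 * (Real.cos (h / 2) / Real.sin (h / 2)) ^ 2 / (2 + 4 * Real.cos h)))
      (knot h x₀ i) := by
  set p := knot h x₀ i
  have hleft'' := hasDerivAt_splineLeftPiece h p hasDerivAt_sinHalfProdDeriv p
  have hright'' := hasDerivAt_splineRightPiece h p hasDerivAt_sinHalfProdDeriv p
  rw [splineLeftPiece_deriv2_center] at hleft''
  rw [splineRightPiece_deriv2_center] at hright''
  rw [← neg_three_sin_mul_cos_half_sq_div_trigBSplineGamma]
  refine HasDerivAt.congr_of_eventuallyEq ?_ (trigBSpline_eventuallyEq_splinePieces h0).deriv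
  exact hasDerivAt_deriv_ite_le (hasDerivAt_splineLeftPiece h p hasDerivAt_sinHalfProd)
    (hasDerivAt_splineRightPiece h p hasDerivAt_sinHalfProd) (splineLeftPiece_center_eq_right h p)
    (splineLeftPiece_deriv_center_eq_right h p) hleft'' hright''

/-- For `0 < h < 2π/3`, the trigonometric cubic B-spline `T_i` is twice
differentiable at its central knot `x_i`, and
`T_i″(x_i) = −3·(cos(h/2)/sin(h/2))² / (2 + 4·cos(h))`. -/
theorem trigBSpline_secondDeriv_center (h x₀ : ℝ) (h0 : 0 < h) (h1 : h < 2 * Real.pi / 3)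
    (i : ℤ) :
    HasDerivAt (deriv (trigBSpline h x₀ i))
      (-(3 * (Real.cos (h / 2) / Real.sin (h / 2)) ^ 2 / (2 + 4 * Real.cos h)))
      (knot h x₀ i) :=
  trigBSpline_secondDeriv_center_general h x₀ h0 i
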